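/- arXiv:1806.10226 — 4 statements merged into one kernel-verified Lean document; each statement's English description precedes it below -/
import Mathlib

section
/- Let H be a finite-dimensional complex Hilbert space of dimension d, and let v ∈ H ⊗ H have Schmidt decomposition v = Σ_{j=1}^{d} α_j ψ_j ⊗ χ_j with α_1 ≥ α_2 ≥ ... ≥ α_d ≥ 0, where {ψ_j} and {χ_j} are orthonormal bases of H. Then for every separable vector u = u_1 ⊗ u_2 with u_1, u_2 ∈ H, the distance satisfies ‖v − u‖ ≥ sqrt(Σ_{j=2}^{d} α_j²), and equality is attained by u_s = α_1 ψ_1 ⊗ χ_1. -/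
open scoped InnerProductSpace

/-- If v ∈ H ⊗ H has Schmidt decomposition v = Σ_j α_j ψ_j ⊗ χ_j with
α_1 ≥ ... ≥ α_d ≥ 0 and orthonormal bases {ψ_j}, {χ_j}, then every separable vector
u₁ ⊗ u₂ is at distance at least √(Σ_{j≥2} α_j²) from v, and this distance is attained
by u_s = α_1 ψ_1 ⊗ χ_1.  Here W plays the role of H ⊗ H: `t` is the bilinear tensor
map, with ⟪t a b, t c e⟫ = ⟪a,c⟫⟪b,e⟫. -/
theorem stmt_0 {H W : Type*} [NormedAddCommGroup H] [InnerProductSpace ℂ H]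
    [NormedAddCommGroup W] [InnerProductSpace ℂ W]
    (d : ℕ) [NeZero d]
    (t : H →ₗ[ℂ] H →ₗ[ℂ] W)
    (ht : ∀ a b c e : H, ⟪t a b, t c e⟫_ℂ = ⟪a, c⟫_ℂ * ⟪b, e⟫_ℂ)
    (ψ χ : OrthonormalBasis (Fin d) ℂ H)
    (α : Fin d → ℝ) (hmono : Antitone α) (hnonneg : ∀ j, 0 ≤ α j)
    (v : W) (hv : v = ∑ j, (α j : ℂ) • t (ψ j) (χ j)) :
    (∀ u₁ u₂ : H,
      Real.sqrt (∑ j ∈ Finset.univ.erase 0, (α j) ^ 2) ≤ ‖v - t u₁ u₂‖) ∧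
    ‖v - (α 0 : ℂ) • t (ψ 0) (χ 0)‖
      = Real.sqrt (∑ j ∈ Finset.univ.erase 0, (α j) ^ 2) := by
  classical
  set e : Fin d → W := fun j => t (ψ j) (χ j) with he_def
  have he : Orthonormal ℂ e := by
    rw [orthonormal_iff_ite]
    intro i j
    have h1 := orthonormal_iff_ite.mp ψ.orthonormal i j
    have h2 := orthonormal_iff_ite.mp χ.orthonormal i j
    simp only [he_def, ht, h1, h2]
    by_cases h : i = j <;> simp [h]
  -- norm of a real-coefficient combination of the orthonormal family
  have key : ∀ (s : Finset (Fin d)) (c : Fin d → ℝ),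
      ‖∑ j ∈ s, (c j : ℂ) • e j‖ = Real.sqrt (∑ j ∈ s, (c j) ^ 2) := by
    intro s c
    have h := he.inner_sum (fun j => (c j : ℂ)) (fun j => (c j : ℂ)) s
    have hn : ‖∑ j ∈ s, (c j : ℂ) • e j‖ ^ 2 = ∑ j ∈ s, (c j) ^ 2 := by
      have h2 := inner_self_eq_norm_sq (𝕜 := ℂ) (∑ j ∈ s, (c j : ℂ) • e j)
      rw [← h2, h]
      simp [Complex.ext_iff, pow_two]
    rw [← hn, Real.sqrt_sq (norm_nonneg _)]
  have hS : (0:ℝ) ≤ ∑ j ∈ Finset.univ.erase 0, (α j) ^ 2 :=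
    Finset.sum_nonneg fun j _ => sq_nonneg _
  constructor
  · intro u₁ u₂
    set S := ∑ j ∈ Finset.univ.erase 0, (α j) ^ 2 with hS_def
    set r := ‖u₁‖ * ‖u₂‖ with hr_def
    have hr0 : 0 ≤ r := mul_nonneg (norm_nonneg _) (norm_nonneg _)
    -- norm of v squared
    have hv2 : ‖v‖ ^ 2 = ∑ j, (α j) ^ 2 := by
      rw [hv, key, Real.sq_sqrt (Finset.sum_nonneg fun j _ => sq_nonneg _)]
    -- norm of u squared
    have hu2 : ‖t u₁ u₂‖ ^ 2 = ‖u₁‖ ^ 2 * ‖u₂‖ ^ 2 := by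
      have := ht u₁ u₂ u₁ u₂
      rw [inner_self_eq_norm_sq_to_K, inner_self_eq_norm_sq_to_K,
        inner_self_eq_norm_sq_to_K] at this
      exact_mod_cast congrArg Complex.re this
    -- bound on the cross term
    have hcross : RCLike.re ⟪v, t u₁ u₂⟫_ℂ ≤ α 0 * r := by
      have hinner : ⟪v, t u₁ u₂⟫_ℂ
          = ∑ j, (α j : ℂ) * (⟪ψ j, u₁⟫_ℂ * ⟪χ j, u₂⟫_ℂ) := by
        rw [hv, sum_inner]
        refine Finset.sum_congr rfl fun j _ => ?_
        rw [inner_smul_left, ht, Complex.conj_ofReal]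
      have h1 : RCLike.re ⟪v, t u₁ u₂⟫_ℂ ≤ ‖⟪v, t u₁ u₂⟫_ℂ‖ := RCLike.re_le_norm _
      have h2 : ‖⟪v, t u₁ u₂⟫_ℂ‖ ≤ ∑ j, α j * (‖⟪ψ j, u₁⟫_ℂ‖ * ‖⟪χ j, u₂⟫_ℂ‖) := by
        rw [hinner]
        refine (norm_sum_le _ _).trans (le_of_eq ?_)
        refine Finset.sum_congr rfl fun j _ => ?_
        rw [norm_mul, norm_mul, Complex.norm_real, Real.norm_of_nonneg (hnonneg j)]
      have h3 : ∑ j, α j * (‖⟪ψ j, u₁⟫_ℂ‖ * ‖⟪χ j, u₂⟫_ℂ‖)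
          ≤ α 0 * ∑ j, ‖⟪ψ j, u₁⟫_ℂ‖ * ‖⟪χ j, u₂⟫_ℂ‖ := by
        rw [Finset.mul_sum]
        refine Finset.sum_le_sum fun j _ => ?_
        exact mul_le_mul_of_nonneg_right (hmono (Fin.zero_le j))
          (mul_nonneg (norm_nonneg _) (norm_nonneg _))
      have h4 : ∑ j, ‖⟪ψ j, u₁⟫_ℂ‖ * ‖⟪χ j, u₂⟫_ℂ‖ ≤ r := by
        have hcs := Finset.sum_mul_sq_le_sq_mul_sq Finset.univ
          (fun j => ‖⟪ψ j, u₁⟫_ℂ‖) (fun j => ‖⟪χ j, u₂⟫_ℂ‖)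
        have hb1 : ∑ j, ‖⟪ψ j, u₁⟫_ℂ‖ ^ 2 ≤ ‖u₁‖ ^ 2 :=
          ψ.orthonormal.sum_inner_products_le u₁
        have hb2 : ∑ j, ‖⟪χ j, u₂⟫_ℂ‖ ^ 2 ≤ ‖u₂‖ ^ 2 :=
          χ.orthonormal.sum_inner_products_le u₂
        have hAB : (∑ j, ‖⟪ψ j, u₁⟫_ℂ‖ ^ 2) * (∑ j, ‖⟪χ j, u₂⟫_ℂ‖ ^ 2) ≤ r ^ 2 := by
          rw [hr_def, mul_pow]
          exact mul_le_mul hb1 hb2 (Finset.sum_nonneg fun j _ => sq_nonneg _) (sq_nonneg _)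
        have h5 : (∑ j, ‖⟪ψ j, u₁⟫_ℂ‖ * ‖⟪χ j, u₂⟫_ℂ‖) ^ 2 ≤ r ^ 2 := hcs.trans hAB
        have h6 := Real.sqrt_le_sqrt h5
        rwa [Real.sqrt_sq (Finset.sum_nonneg fun j _ =>
          mul_nonneg (norm_nonneg _) (norm_nonneg _)), Real.sqrt_sq hr0] at h6
      calc RCLike.re ⟪v, t u₁ u₂⟫_ℂ ≤ ‖⟪v, t u₁ u₂⟫_ℂ‖ := h1
        _ ≤ ∑ j, α j * (‖⟪ψ j, u₁⟫_ℂ‖ * ‖⟪χ j, u₂⟫_ℂ‖) := h2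
        _ ≤ α 0 * ∑ j, ‖⟪ψ j, u₁⟫_ℂ‖ * ‖⟪χ j, u₂⟫_ℂ‖ := h3
        _ ≤ α 0 * r := mul_le_mul_of_nonneg_left h4 (hnonneg 0)
    -- put it together
    have hsplit : ∑ j, (α j) ^ 2 = (α 0) ^ 2 + S :=
      (Finset.add_sum_erase Finset.univ (fun j => α j ^ 2)
        (Finset.mem_univ (0 : Fin d))).symm
    have hsq : S ≤ ‖v - t u₁ u₂‖ ^ 2 := by
      have hns := norm_sub_sq (𝕜 := ℂ) v (t u₁ u₂)
      rw [hns, hv2, hu2, hsplit]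
      nlinarith [sq_nonneg (α 0 - r), hcross]
    calc Real.sqrt S ≤ Real.sqrt (‖v - t u₁ u₂‖ ^ 2) := Real.sqrt_le_sqrt hsq
      _ = ‖v - t u₁ u₂‖ := Real.sqrt_sq (norm_nonneg _)
  · have hrest : v - (α 0 : ℂ) • t (ψ 0) (χ 0)
        = ∑ j ∈ Finset.univ.erase 0, (α j : ℂ) • e j := by
      rw [hv, ← Finset.add_sum_erase Finset.univ (fun j => (α j : ℂ) • e j)
        (Finset.mem_univ (0 : Fin d))]
      simp [he_def]
    rw [hrest, key]
end

section
/- Let α_1 ≥ α_2 ≥ ... ≥ α_d ≥ 0 be real numbers and a_1,...,a_d, b_1,...,b_d complex numbers. Then α_1² + (Σ_j |a_j|²)(Σ_l |b_l|²) − Σ_j α_j (a_j b_j + conj(a_j) conj(b_j)) ≥ 0. -/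
/-! With `S = ∑ ‖a j‖ * ‖b j‖`, every summand of the subtracted sum is at most `2 α₀ ‖a j‖ ‖b j‖`,
and Cauchy–Schwarz bounds the product of the two norm sums below by `S²`; what remains is
`α₀² + S² - 2 α₀ S = (α₀ - S)² ≥ 0`. -/

open Finset ComplexConjugate

theorem Complex.re_mul_add_conj_mul_conj_le (z w : ℂ) :
    (z * w + conj z * conj w).re ≤ 2 * (‖z‖ * ‖w‖) := by
  have h : (z * w + conj z * conj w).re = 2 * (z * w).re := by
    simp only [add_re, mul_re, conj_re, conj_im]
    ring
  rw [h, ← norm_mul]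
  linarith [re_le_norm (z * w)]

section WeightedSum

variable {ι : Type*} [Fintype ι] (α : ι → ℝ) (M : ℝ) (a b : ι → ℂ)

theorem sum_mul_re_mul_add_conj_le (hα₀ : ∀ j, 0 ≤ α j) (hαM : ∀ j, α j ≤ M) :
    ∑ j, α j * (a j * b j + conj (a j) * conj (b j)).re ≤ 2 * M * ∑ j, ‖a j‖ * ‖b j‖ := by
  calc ∑ j, α j * (a j * b j + conj (a j) * conj (b j)).re
      ≤ ∑ j, M * (2 * (‖a j‖ * ‖b j‖)) := sum_le_sum fun j _ =>
        (mul_le_mul_of_nonneg_left (Complex.re_mul_add_conj_mul_conj_le _ _) (hα₀ j)).trans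
          (mul_le_mul_of_nonneg_right (hαM j) (by positivity))
    _ = 2 * M * ∑ j, ‖a j‖ * ‖b j‖ := by
      rw [mul_sum]
      exact sum_congr rfl fun j _ => by ring

theorem sub_sum_mul_re_mul_add_conj_nonneg (hα₀ : ∀ j, 0 ≤ α j) (hαM : ∀ j, α j ≤ M) :
    0 ≤ M ^ 2 + (∑ j, ‖a j‖ ^ 2) * (∑ j, ‖b j‖ ^ 2)
      - ∑ j, α j * (a j * b j + conj (a j) * conj (b j)).re := by
  have hCS : (∑ j, ‖a j‖ * ‖b j‖) ^ 2 ≤ (∑ j, ‖a j‖ ^ 2) * (∑ j, ‖b j‖ ^ 2) :=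
    sum_mul_sq_le_sq_mul_sq _ _ _
  have hsum := sum_mul_re_mul_add_conj_le α M a b hα₀ hαM
  nlinarith [sq_nonneg (M - ∑ j, ‖a j‖ * ‖b j‖)]

end WeightedSum

/-- For α₁ ≥ ... ≥ α_d ≥ 0 and complex a_j, b_j,
α₁² + (Σ|a_j|²)(Σ|b_l|²) − Σ α_j (a_j b_j + conj(a_j) conj(b_j)) ≥ 0. -/
theorem stmt_1 (d : ℕ) [NeZero d] (α : Fin d → ℝ)
    (hmono : Antitone α) (hnonneg : ∀ j, 0 ≤ α j)
    (a b : Fin d → ℂ) :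
    0 ≤ α 0 ^ 2 + (∑ j, ‖a j‖ ^ 2) * (∑ l, ‖b l‖ ^ 2)
      - ∑ j, α j * (a j * b j + (starRingEnd ℂ) (a j) * (starRingEnd ℂ) (b j)).re :=
  sub_sum_mul_re_mul_add_conj_nonneg α (α 0) a b hnonneg fun j => hmono (Fin.zero_le j)
end

section
/- For k ≥ 3 and μ ∈ ℝ, the theta functions θ_j^{(k,μ)}(z) = Σ_{n∈ℤ} exp(2πi[½ k i (n + (μ+j)/k)² + (n + (μ+j)/k) k z]), j = 1,...,k, are pairwise orthogonal with respect to the inner product ⟨f,g⟩ = ∫_0^1 ∫_0^1 f(z) conj(g(z)) exp((kπ/2)(z−z̄)²) dx dy (z = x+iy). -/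
open intervalIntegral

/-- The k-th order theta function with characteristics (μ, 0) for the lattice ℤ + iℤ:
θ_j^{(k,μ)}(z) = Σ_{n∈ℤ} exp(2πi[½ k i (n + (μ+j)/k)² + (n + (μ+j)/k) k z]). -/
noncomputable def theta (k : ℕ) (μ : ℝ) (j : ℕ) (z : ℂ) : ℂ :=
  ∑' n : ℤ, Complex.exp (2 * (Real.pi : ℂ) * Complex.I *
    ((1 / 2 : ℂ) * (k : ℂ) * Complex.I * ((n : ℂ) + ((μ : ℂ) + (j : ℂ)) / (k : ℂ)) ^ 2 +
      ((n : ℂ) + ((μ : ℂ) + (j : ℂ)) / (k : ℂ)) * (k : ℂ) * z))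

/-!
For fixed `y`, `x ↦ θ_j(x + iy)` is an absolutely convergent Fourier series with frequencies
`k n + μ + j`, and the weight `exp((kπ/2)(z − z̄)²) = exp(−2kπy²)` does not depend on `x`.
Since `0 < |j − l| < k`, every frequency of `θ_j` differs from every frequency of `θ_l` by the
nonzero integer `k (n − m) + j − l`, so each term of `θ_j · conj θ_l` integrates to zero over
`[0, 1]`, and dominated convergence lets us integrate the double series termwise.
-/

open Complex Real ComplexConjugate

theorem integral_exp_two_pi_I_int_mul_eq_zero {N : ℤ} (hN : N ≠ 0) :
    ∫ x in (0 : ℝ)..1, cexp (2 * π * I * N * x) = 0 := by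
  have hc : 2 * π * I * N ≠ 0 := mul_ne_zero two_pi_I_ne_zero (Int.cast_ne_zero.mpr hN)
  rw [integral_exp_mul_complex hc, ofReal_one, mul_one, mul_comm _ (N : ℂ),
    exp_int_mul_two_pi_mul_I]
  simp

theorem norm_exp_two_pi_I_mul_mul (t x : ℝ) : ‖cexp (2 * π * I * t * x)‖ = 1 := by
  rw [show 2 * π * I * t * x = ((2 * π * t * x : ℝ) : ℂ) * I by push_cast; ring,
    norm_exp_ofReal_mul_I]

theorem summable_norm_mul_exp_two_pi_I_mul_mul {ι : Type*} {a : ι → ℂ} (ha : Summable (‖a ·‖))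
    (ω : ι → ℝ) (x : ℝ) : Summable fun i => ‖a i * cexp (2 * π * I * ω i * x)‖ := by
  simpa only [norm_mul, norm_exp_two_pi_I_mul_mul, mul_one] using ha

section ShiftedFourierSeries

variable {ι κ : Type*} {a : ι → ℂ} {b : κ → ℂ} {ω : ι → ℝ} {ω' : κ → ℝ}

theorem hasSum_mul_conj_tsum_exp_two_pi_I (ha : Summable (‖a ·‖)) (hb : Summable (‖b ·‖))
    (x : ℝ) :
    HasSum (fun p : ι × κ => a p.1 * conj (b p.2) * cexp (2 * π * I * (ω p.1 - ω' p.2 : ℝ) * x))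
      ((∑' i, a i * cexp (2 * π * I * ω i * x)) *
        conj (∑' j, b j * cexp (2 * π * I * ω' j * x))) := by
  have hfa := summable_norm_mul_exp_two_pi_I_mul_mul ha ω x
  have hfb := summable_norm_mul_exp_two_pi_I_mul_mul hb ω' x
  have hfb' : Summable fun j => ‖conj (b j * cexp (2 * π * I * ω' j * x))‖ := by
    simpa only [Complex.norm_conj] using hfb
  have hsum_a := hfa.of_norm.hasSum
  have hsum_b := Complex.hasSum_conj'.mpr hfb.of_norm.hasSum
  have hsum_ab := summable_mul_of_summable_norm hfa hfb'
  refine (hsum_a.mul hsum_b hsum_ab).congr_fun fun p => ?_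
  simp only [map_mul, ← exp_conj, conj_ofReal, conj_I, map_ofNat]
  rw [mul_mul_mul_comm, ← Complex.exp_add]
  congr 2
  push_cast
  ring

theorem integral_tsum_mul_conj_tsum_eq_zero [Countable ι] [Countable κ]
    (ha : Summable (‖a ·‖)) (hb : Summable (‖b ·‖))
    (hω : ∀ i j, ∃ N : ℤ, N ≠ 0 ∧ ω i - ω' j = N) :
    ∫ x in (0 : ℝ)..1, (∑' i, a i * cexp (2 * π * I * ω i * x)) *
      conj (∑' j, b j * cexp (2 * π * I * ω' j * x)) = 0 := by
  have h_norm : ∀ (p : ι × κ) (x : ℝ),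
      ‖a p.1 * conj (b p.2) * cexp (2 * π * I * (ω p.1 - ω' p.2 : ℝ) * x)‖ = ‖a p.1‖ * ‖b p.2‖ := by
    intro p x
    rw [norm_mul, norm_mul, Complex.norm_conj, norm_exp_two_pi_I_mul_mul, mul_one]
  have h_int : ∀ p : ι × κ,
      ∫ x in (0 : ℝ)..1, a p.1 * conj (b p.2) * cexp (2 * π * I * (ω p.1 - ω' p.2 : ℝ) * x) = 0 := by
    intro p
    obtain ⟨N, hN, hωN⟩ := hω p.1 p.2
    rw [integral_const_mul, hωN, ofReal_intCast, integral_exp_two_pi_I_int_mul_eq_zero hN,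
      mul_zero]
  have h_bound : Summable fun p : ι × κ => ‖a p.1‖ * ‖b p.2‖ :=
    ha.mul_of_nonneg hb (fun _ => norm_nonneg _) (fun _ => norm_nonneg _)
  have h := hasSum_integral_of_dominated_convergence (μ := MeasureTheory.volume) (a := 0) (b := 1)
    (F := fun (p : ι × κ) (x : ℝ) =>
      a p.1 * conj (b p.2) * cexp (2 * π * I * (ω p.1 - ω' p.2 : ℝ) * x))
    (f := fun x : ℝ => (∑' i, a i * cexp (2 * π * I * ω i * x)) *
      conj (∑' j, b j * cexp (2 * π * I * ω' j * x)))
    (fun p _ => ‖a p.1‖ * ‖b p.2‖)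
    (fun p => by fun_prop) (fun p => .of_forall fun x _ => (h_norm p x).le)
    (.of_forall fun _ _ => h_bound)
    intervalIntegrable_const (.of_forall fun x _ => hasSum_mul_conj_tsum_exp_two_pi_I ha hb x)
  simp only [h_int] at h
  exact h.unique hasSum_zero

end ShiftedFourierSeries

noncomputable def thetaTerm (k : ℕ) (c : ℂ) (n : ℤ) (z : ℂ) : ℂ :=
  cexp (2 * π * I * ((1 / 2 : ℂ) * k * I * (n + c) ^ 2 + (n + c) * k * z))

theorem theta_eq_tsum_thetaTerm (k : ℕ) (μ : ℝ) (j : ℕ) (z : ℂ) :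
    theta k μ j z = ∑' n : ℤ, thetaTerm k ((μ + j) / k) n z :=
  rfl

theorem summable_norm_thetaTerm {k : ℕ} (hk : 0 < k) (c z : ℂ) :
    Summable fun n : ℤ => ‖thetaTerm k c n z‖ := by
  have hτ : 0 < (k * I : ℂ).im := by simpa using hk
  refine summable_norm_iff.mpr ?_
  refine (((summable_jacobiTheta₂_term_iff (k * z + c * k * I) (k * I)).mpr hτ).mul_right
    (cexp (π * I * c ^ 2 * (k * I) + 2 * π * I * c * k * z))).congr fun n => ?_
  rw [jacobiTheta₂_term, thetaTerm, ← Complex.exp_add]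
  ring_nf

theorem thetaTerm_ofReal_add (k : ℕ) (c : ℂ) (n : ℤ) (x : ℝ) (z : ℂ) :
    thetaTerm k c n (x + z) = thetaTerm k c n z * cexp (2 * π * I * ((n + c) * k) * x) := by
  rw [thetaTerm, thetaTerm, ← Complex.exp_add]
  ring_nf

theorem theta_ofReal_add {k : ℕ} (hk : k ≠ 0) (μ : ℝ) (j : ℕ) (x : ℝ) (z : ℂ) :
    theta k μ j (x + z) =
      ∑' n : ℤ, thetaTerm k ((μ + j) / k) n z * cexp (2 * π * I * (k * n + μ + j : ℝ) * x) := by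
  rw [theta_eq_tsum_thetaTerm]
  congr 1 with n
  rw [thetaTerm_ofReal_add]
  congr 4
  push_cast
  field_simp
  ring

theorem ofReal_add_mul_I_sub_conj (x y : ℝ) : (x + y * I : ℂ) - conj (x + y * I) = 2 * y * I := by
  rw [Complex.sub_conj]
  simp

theorem stmt_15_general (k : ℕ) (μ : ℝ) (j l : ℕ)
    (hj : 1 ≤ j) (hj' : j ≤ k) (hl : 1 ≤ l) (hl' : l ≤ k) (hne : j ≠ l) :
    (∫ y in (0 : ℝ)..1, ∫ x in (0 : ℝ)..1,
      theta k μ j (x + y * Complex.I) *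
        (starRingEnd ℂ) (theta k μ l (x + y * Complex.I)) *
        Complex.exp (((k : ℂ) * Real.pi / 2) *
          ((x + y * Complex.I) - (starRingEnd ℂ) (x + y * Complex.I)) ^ 2)) = 0 := by
  have hk : 0 < k := by omega
  have hfreq : ∀ n m : ℤ, ∃ N : ℤ, N ≠ 0 ∧ (k * n + μ + j : ℝ) - (k * m + μ + l) = N := by
    intro n m
    refine ⟨k * (n - m) + (j - l), fun hN => hne ?_, by push_cast; ring⟩
    have hdvd : (k : ℤ) ∣ j - l := ⟨m - n, by linarith⟩
    have := Int.eq_zero_of_dvd_of_natAbs_lt_natAbs hdvd (by omega)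
    omega
  have hinner : ∀ y : ℝ, ∫ x in (0 : ℝ)..1,
      theta k μ j (x + y * I) * conj (theta k μ l (x + y * I)) *
        cexp (k * π / 2 * ((x + y * I) - conj (x + y * I)) ^ 2) = 0 := by
    intro y
    simp only [ofReal_add_mul_I_sub_conj, theta_ofReal_add hk.ne']
    rw [integral_mul_const, integral_tsum_mul_conj_tsum_eq_zero
      (summable_norm_thetaTerm hk _ _) (summable_norm_thetaTerm hk _ _) hfreq, zero_mul]
  simp only [hinner, integral_zero]

/-- for k ≥ 3 and real μ, the theta functions θ_j^{(k,μ)}, j = 1,...,k,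
are pairwise orthogonal with respect to
⟨f,g⟩ = ∫₀¹∫₀¹ f(z) conj(g(z)) exp((kπ/2)(z − z̄)²) dx dy, z = x + iy. -/
theorem stmt_15 (k : ℕ) (hk : 3 ≤ k) (μ : ℝ) (j l : ℕ)
    (hj : 1 ≤ j) (hj' : j ≤ k) (hl : 1 ≤ l) (hl' : l ≤ k) (hne : j ≠ l) :
    (∫ y in (0 : ℝ)..1, ∫ x in (0 : ℝ)..1,
      theta k μ j (x + y * Complex.I) *
        (starRingEnd ℂ) (theta k μ l (x + y * Complex.I)) *
        Complex.exp (((k : ℂ) * Real.pi / 2) *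
          ((x + y * Complex.I) - (starRingEnd ℂ) (x + y * Complex.I)) ^ 2)) = 0 :=
  stmt_15_general k μ j l hj hj' hl hl' hne
end

section
/- Let H be a d-dimensional Hilbert space with orthonormal basis {e_j}, and v = Σ_j α_j e_j ⊗ e_j with α_1 ≥ ... ≥ α_d ≥ 0 and Σ α_j² = 1. Then for any indices j with α_j = α_1, the vector α_1 e_j ⊗ e_j is a separable vector at minimal distance sqrt(1 − α_1²) from v; in particular the closest separable vector is not unique when α_1 = α_2. -/
/-! Since `t` multiplies inner products, the vectors `e_j ⊗ e_j` are orthonormal; hence `‖v‖ = 1`,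
`⟪e_j ⊗ e_j, v⟫ = α_j`, and `‖v - α_j e_j ⊗ e_j‖² = 1 - α_j²`. For a separable `u₁ ⊗ u₂`,
`⟪v, u₁ ⊗ u₂⟫ = Σ α_j ⟪e_j, u₁⟫ ⟪e_j, u₂⟫` has modulus at most `α_1 s` with `s = ‖u₁‖ ‖u₂‖`
(Cauchy–Schwarz and Bessel), so `‖v - u₁ ⊗ u₂‖² ≥ 1 - 2 α_1 s + s² ≥ 1 - α_1²`. -/

open scoped InnerProductSpace
open RCLike

section InnerProductSpace

variable {𝕜 E ι : Type*} [RCLike 𝕜] [NormedAddCommGroup E] [InnerProductSpace 𝕜 E]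

theorem sq_norm_sub_sq_le_norm_sub_sq {x c : E} {M : ℝ} (h : re ⟪x, c⟫_𝕜 ≤ M * ‖c‖) :
    ‖x‖ ^ 2 - M ^ 2 ≤ ‖x - c‖ ^ 2 := by
  rw [@norm_sub_sq 𝕜]
  nlinarith [sq_nonneg (‖c‖ - M)]

theorem norm_sub_ofReal_smul_sq {x f : E} {r : ℝ} (hf : ‖f‖ = 1) (h : ⟪f, x⟫_𝕜 = r) :
    ‖x - (r : 𝕜) • f‖ ^ 2 = ‖x‖ ^ 2 - r ^ 2 := by
  have hxf : ⟪x, (r : 𝕜) • f⟫_𝕜 = ((r ^ 2 : ℝ) : 𝕜) := by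
    rw [inner_smul_right, ← inner_conj_symm, h, conj_ofReal, ofReal_pow, sq]
  rw [@norm_sub_sq 𝕜, hxf, ofReal_re, norm_smul, hf, norm_ofReal, mul_one, sq_abs]
  ring

theorem Orthonormal.sum_norm_inner_mul_norm_inner_le [Fintype ι] {e : ι → E}
    (he : Orthonormal 𝕜 e) (x y : E) :
    ∑ j, ‖⟪e j, x⟫_𝕜‖ * ‖⟪e j, y⟫_𝕜‖ ≤ ‖x‖ * ‖y‖ :=
  calc ∑ j, ‖⟪e j, x⟫_𝕜‖ * ‖⟪e j, y⟫_𝕜‖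
      ≤ √(∑ j, ‖⟪e j, x⟫_𝕜‖ ^ 2) * √(∑ j, ‖⟪e j, y⟫_𝕜‖ ^ 2) :=
        Real.sum_mul_le_sqrt_mul_sqrt _ _ _
    _ ≤ √(‖x‖ ^ 2) * √(‖y‖ ^ 2) := by
        gcongr <;> exact Orthonormal.sum_inner_products_le _ he
    _ = ‖x‖ * ‖y‖ := by rw [Real.sqrt_sq (norm_nonneg x), Real.sqrt_sq (norm_nonneg y)]

theorem Orthonormal.norm_sum_ofReal_smul_sq [Fintype ι] {f : ι → E} (hf : Orthonormal 𝕜 f)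
    (α : ι → ℝ) : ‖∑ j, (α j : 𝕜) • f j‖ ^ 2 = ∑ j, α j ^ 2 := by
  rw [← inner_self_eq_norm_sq (𝕜 := 𝕜), hf.inner_sum, map_sum]
  simp only [conj_ofReal, ← ofReal_mul, ofReal_re, sq]

end InnerProductSpace

section TensorMap

variable {𝕜 H W ι : Type*} [RCLike 𝕜] [NormedAddCommGroup H] [InnerProductSpace 𝕜 H]
  [NormedAddCommGroup W] [InnerProductSpace 𝕜 W] {t : H →ₗ[𝕜] H →ₗ[𝕜] W}

theorem norm_apply_apply_eq_mul_norm (ht : ∀ a b c e : H, ⟪t a b, t c e⟫_𝕜 = ⟪a, c⟫_𝕜 * ⟪b, e⟫_𝕜)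
    (a b : H) : ‖t a b‖ = ‖a‖ * ‖b‖ := by
  have h := congrArg re (ht a b a b)
  rw [inner_self_eq_norm_sq, inner_self_eq_norm_sq_to_K, inner_self_eq_norm_sq_to_K,
    ← ofReal_pow, ← ofReal_pow, ← ofReal_mul, ofReal_re, ← mul_pow] at h
  exact (pow_left_inj₀ (norm_nonneg _) (by positivity) two_ne_zero).mp h

theorem Orthonormal.diag_apply (ht : ∀ a b c e : H, ⟪t a b, t c e⟫_𝕜 = ⟪a, c⟫_𝕜 * ⟪b, e⟫_𝕜)
    {e : ι → H} (he : Orthonormal 𝕜 e) : Orthonormal 𝕜 fun j ↦ t (e j) (e j) := by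
  classical
  rw [orthonormal_iff_ite] at he ⊢
  intro i j
  rw [ht, he]
  split_ifs <;> simp

theorem inner_sum_smul_diag_apply [Fintype ι]
    (ht : ∀ a b c e : H, ⟪t a b, t c e⟫_𝕜 = ⟪a, c⟫_𝕜 * ⟪b, e⟫_𝕜) (e : ι → H) (α : ι → ℝ)
    (x y : H) :
    ⟪∑ j, (α j : 𝕜) • t (e j) (e j), t x y⟫_𝕜 = ∑ j, (α j : 𝕜) * (⟪e j, x⟫_𝕜 * ⟪e j, y⟫_𝕜) := by
  simp only [sum_inner, inner_smul_left, conj_ofReal, ht]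

theorem norm_inner_sum_smul_diag_apply_le [Fintype ι]
    (ht : ∀ a b c e : H, ⟪t a b, t c e⟫_𝕜 = ⟪a, c⟫_𝕜 * ⟪b, e⟫_𝕜) {e : ι → H}
    (he : Orthonormal 𝕜 e) {α : ι → ℝ} {M : ℝ} (hM : 0 ≤ M) (hα : ∀ j, |α j| ≤ M) (x y : H) :
    ‖⟪∑ j, (α j : 𝕜) • t (e j) (e j), t x y⟫_𝕜‖ ≤ M * ‖t x y‖ :=
  calc ‖⟪∑ j, (α j : 𝕜) • t (e j) (e j), t x y⟫_𝕜‖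
      ≤ ∑ j, |α j| * (‖⟪e j, x⟫_𝕜‖ * ‖⟪e j, y⟫_𝕜‖) := by
        rw [inner_sum_smul_diag_apply ht]
        refine (norm_sum_le _ _).trans_eq ?_
        simp only [norm_mul, norm_ofReal]
    _ ≤ ∑ j, M * (‖⟪e j, x⟫_𝕜‖ * ‖⟪e j, y⟫_𝕜‖) := by gcongr with j; exact hα j
    _ ≤ M * (‖x‖ * ‖y‖) := by
        rw [← Finset.mul_sum]
        exact mul_le_mul_of_nonneg_left (he.sum_norm_inner_mul_norm_inner_le x y) hM
    _ = M * ‖t x y‖ := by rw [norm_apply_apply_eq_mul_norm ht]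

end TensorMap

/-- for v = Σ_j α_j e_j ⊗ e_j with α_1 ≥ ... ≥ α_d ≥ 0, Σ α_j² = 1,
every α_1 e_j ⊗ e_j with α_j = α_1 is a separable vector at the minimal distance
√(1 − α_1²) from v; in particular when α_1 = α_2 the closest separable vector is
not unique.  W plays the role of H ⊗ H via the tensor map `t`. -/
theorem stmt_18 {H W : Type*} [NormedAddCommGroup H] [InnerProductSpace ℂ H]
    [NormedAddCommGroup W] [InnerProductSpace ℂ W]
    (d : ℕ) [NeZero d] (hd : 2 ≤ d)
    (t : H →ₗ[ℂ] H →ₗ[ℂ] W)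
    (ht : ∀ a b c e : H, ⟪t a b, t c e⟫_ℂ = ⟪a, c⟫_ℂ * ⟪b, e⟫_ℂ)
    (e : OrthonormalBasis (Fin d) ℂ H)
    (α : Fin d → ℝ) (hmono : Antitone α) (hnonneg : ∀ j, 0 ≤ α j)
    (hsum : ∑ j, α j ^ 2 = 1)
    (v : W) (hv : v = ∑ j, (α j : ℂ) • t (e j) (e j)) :
    (∀ j : Fin d, α j = α 0 →
      ‖v - (α 0 : ℂ) • t (e j) (e j)‖ = Real.sqrt (1 - α 0 ^ 2) ∧
      ∀ u₁ u₂ : H, Real.sqrt (1 - α 0 ^ 2) ≤ ‖v - t u₁ u₂‖) ∧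
    (α 1 = α 0 → (α 0 : ℂ) • t (e 0) (e 0) ≠ (α 0 : ℂ) • t (e 1) (e 1)) := by
  have hf := e.orthonormal.diag_apply ht
  have hαle : ∀ j, |α j| ≤ α 0 := fun j ↦
    (abs_of_nonneg (hnonneg j)).trans_le (hmono (Fin.zero_le j))
  have hv1 : ‖v‖ ^ 2 = 1 := hv ▸ (hf.norm_sum_ofReal_smul_sq α).trans hsum
  refine ⟨fun j hj ↦ ⟨?_, fun u₁ u₂ ↦ ?_⟩, fun _ ↦ ?_⟩
  · have hvj : ⟪t (e j) (e j), v⟫_ℂ = α 0 := by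
      rw [hv, hf.inner_right_fintype (fun j ↦ (α j : ℂ)) j, hj]
    rw [← hv1, ← norm_sub_ofReal_smul_sq (f := t (e j) (e j)) (hf.1 j) hvj]
    exact (Real.sqrt_sq (norm_nonneg _)).symm
  · have hre : re ⟪v, t u₁ u₂⟫_ℂ ≤ α 0 * ‖t u₁ u₂‖ := (re_le_norm _).trans
      (hv ▸ norm_inner_sum_smul_diag_apply_le ht e.orthonormal (hnonneg 0) hαle u₁ u₂)
    exact Real.sqrt_le_iff.mpr ⟨norm_nonneg _, hv1 ▸ sq_norm_sub_sq_le_norm_sub_sq hre⟩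
  · have hα0 : α 0 ≠ 0 := by
      intro h0
      have hzero : ∀ j, α j = 0 := fun j ↦ abs_nonpos_iff.mp (h0 ▸ hαle j)
      simp [hzero] at hsum
    have h01 : (0 : Fin d) ≠ 1 := by
      intro h
      have := congrArg Fin.val h
      simp [Nat.mod_eq_of_lt hd] at this
    exact (smul_right_injective W (Complex.ofReal_ne_zero.mpr hα0)).ne
      (hf.linearIndependent.injective.ne h01)
end
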